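/- Let t be a contraction on H. Then for every integer k ≥ 1, the following identity holds in [0,∞]: Tr(1 − tt*) = Tr(t^k (1 − tt*) (t*)^k) + Tr((1 − t*t)^{1/2} (1 − t^k (t*)^k) (1 − t*t)^{1/2}). -/

import Mathlib

/-!
Write `D = 1 - t t*`, which is positive because `‖t‖ ≤ 1`. For every operator `X` the traces
of `X* X` and `X X*` agree, both being `∑ᵢ ∑ⱼ |⟨bⱼ, X bᵢ⟩|²`. Applying this to `X = tʲ √D` and
inserting `t* t + c² = 1` between `X*` and `X` gives
`Tr(tʲ D t*ʲ) = Tr(tʲ⁺¹ D t*ʲ⁺¹) + Tr(c tʲ D t*ʲ c)`.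
Iterating from `j = 0` to `k - 1` and using `1 - tᵏ t*ᵏ = ∑_{j<k} tʲ D t*ʲ` yields the identity;
every term lies in `[0,∞]`, so the telescoping needs no subtraction.
-/

open Filter Finset ContinuousLinearMap
open scoped ENNReal

/-- The trace (in `[0,∞]`) of an operator on a complex Hilbert space, computed in a
Hilbert (orthonormal) basis `b`: `Tr A = ∑ᵢ ⟨bᵢ, A bᵢ⟩` (real part, clamped to `[0,∞]`).
For a positive operator this is the usual trace, independent of the choice of basis. -/
noncomputable def opTrace {H : Type*} [NormedAddCommGroup H] [InnerProductSpace ℂ H]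
    [CompleteSpace H] {ι : Type*} (b : HilbertBasis ι ℂ H) (A : H →L[ℂ] H) : ℝ≥0∞ :=
  ∑' i, ENNReal.ofReal (inner ℂ (b i) (A (b i)) : ℂ).re

theorem HilbertBasis.hasSum_norm_inner_sq {ι 𝕜 E : Type*} [RCLike 𝕜] [NormedAddCommGroup E]
    [InnerProductSpace 𝕜 E] (b : HilbertBasis ι 𝕜 E) (x : E) :
    HasSum (fun i ↦ ‖inner 𝕜 (b i) x‖ ^ 2) (‖x‖ ^ 2) := by
  simpa [b.repr_apply_apply] using lp.hasSum_norm (p := 2) (by norm_num) (b.repr x)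

theorem CStarAlgebra.one_sub_mul_star_nonneg {A : Type*} [CStarAlgebra A] [PartialOrder A]
    [StarOrderedRing A] {a : A} (ha : ‖a‖ ≤ 1) : 0 ≤ 1 - a * star a := by
  rw [sub_nonneg, ← CStarAlgebra.norm_le_one_iff_of_nonneg _ (mul_star_self_nonneg a),
    CStarRing.norm_self_mul_star]
  exact mul_le_one₀ ha (norm_nonneg a) ha

theorem one_sub_pow_mul_pow_eq_sum {R : Type*} [Ring R] (x y : R) (k : ℕ) :
    1 - x ^ k * y ^ k = ∑ j ∈ range k, x ^ j * (1 - x * y) * y ^ j := by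
  have htel := sum_range_sub' (fun j ↦ x ^ j * y ^ j) k
  rw [pow_zero, pow_zero, one_mul] at htel
  rw [← htel]
  refine sum_congr rfl fun j _ ↦ ?_
  rw [pow_succ x, pow_succ' y]
  noncomm_ring

theorem eq_add_sum_range_of_forall_eq_add {M : Type*} [AddCommMonoid M] {f g : ℕ → M}
    (h : ∀ j, f j = f (j + 1) + g j) (k : ℕ) : f 0 = f k + ∑ j ∈ range k, g j := by
  induction k with
  | zero => simp
  | succ k ih => rw [ih, h k, sum_range_succ, add_assoc, add_comm (g k)]

section Trace

variable {H : Type*} [NormedAddCommGroup H] [InnerProductSpace ℂ H] [CompleteSpace H]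
  {ι : Type*} (b : HilbertBasis ι ℂ H)

theorem opTrace_star_mul_self (X : H →L[ℂ] H) :
    opTrace b (star X * X) = ∑' i, ∑' j, ENNReal.ofReal (‖inner ℂ (b j) (X (b i))‖ ^ 2) := by
  refine tsum_congr fun i ↦ ?_
  have hparseval := b.hasSum_norm_inner_sq (X (b i))
  rw [mul_apply_eq_comp, star_eq_adjoint, adjoint_inner_right,
    ← RCLike.re_to_complex, inner_self_eq_norm_sq,
    ← hparseval.tsum_eq, ENNReal.ofReal_tsum_of_nonneg (fun j ↦ by positivity) hparseval.summable]

theorem opTrace_star_mul_self_comm (X : H →L[ℂ] H) :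
    opTrace b (star X * X) = opTrace b (X * star X) := by
  have := opTrace_star_mul_self b (star X)
  rw [star_star] at this
  rw [opTrace_star_mul_self, this, ENNReal.tsum_comm]
  simp_rw [star_eq_adjoint, adjoint_inner_right, ← inner_conj_symm (b _), RCLike.norm_conj]

theorem opTrace_add {A B : H →L[ℂ] H} (hA : 0 ≤ A) (hB : 0 ≤ B) :
    opTrace b (A + B) = opTrace b A + opTrace b B := by
  rw [nonneg_iff_isPositive] at hA hB
  simp only [opTrace, add_apply, inner_add_right, ← ENNReal.tsum_add]
  exact tsum_congr fun i ↦
    ENNReal.ofReal_add (hA.re_inner_nonneg_right _) (hB.re_inner_nonneg_right _)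

theorem opTrace_sum {κ : Type*} (s : Finset κ) {A : κ → H →L[ℂ] H} (hA : ∀ j ∈ s, 0 ≤ A j) :
    opTrace b (∑ j ∈ s, A j) = ∑ j ∈ s, opTrace b (A j) := by
  classical
  induction s using Finset.induction_on with
  | empty => simp [opTrace]
  | insert j s hj ih =>
    rw [sum_insert hj, sum_insert hj, opTrace_add b (hA j (mem_insert_self j s))
      (sum_nonneg fun i hi ↦ hA i (mem_insert_of_mem hi)),
      ih fun i hi ↦ hA i (mem_insert_of_mem hi)]

theorem opTrace_conj_eq_add {u v : H →L[ℂ] H} (huv : star u * u + star v * v = 1)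
    {A : H →L[ℂ] H} (hA : 0 ≤ A) (Y : H →L[ℂ] H) :
    opTrace b (Y * A * star Y)
      = opTrace b (u * Y * A * star (u * Y)) + opTrace b (v * Y * A * star (v * Y)) := by
  obtain ⟨a, rfl⟩ := CStarAlgebra.nonneg_iff_eq_mul_star_self.mp hA
  have hsplit : star (Y * a) * (Y * a)
      = star (u * Y * a) * (u * Y * a) + star (v * Y * a) * (v * Y * a) :=
    calc star (Y * a) * (Y * a) = star (Y * a) * (star u * u + star v * v) * (Y * a) := by
          rw [huv, mul_one]
      _ = _ := by simp only [star_mul]; noncomm_ring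
  have hfactor (Z : H →L[ℂ] H) : Z * (a * star a) * star Z = Z * a * star (Z * a) := by
    rw [star_mul, mul_assoc, mul_assoc, mul_assoc]
  rw [hfactor, hfactor, hfactor, ← opTrace_star_mul_self_comm, hsplit,
    opTrace_add b (star_mul_self_nonneg _) (star_mul_self_nonneg _), opTrace_star_mul_self_comm,
    opTrace_star_mul_self_comm]

end Trace

/-- The telescoped trace identity for a contraction `t`: for every `k ≥ 1`, in `[0,∞]`,
`Tr(1 - t t*) = Tr(tᵏ (1 - t t*) (t*)ᵏ) + Tr(c (1 - tᵏ (t*)ᵏ) c)`, where `c` is the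
positive square root of `1 - t* t`. -/
theorem telescoped_trace_identity
    {H : Type*} [NormedAddCommGroup H] [InnerProductSpace ℂ H] [CompleteSpace H]
    {ι : Type*} (b : HilbertBasis ι ℂ H)
    (t : H →L[ℂ] H) (ht : ‖t‖ ≤ 1)
    (c : H →L[ℂ] H) (hc : c.IsPositive) (hc2 : c * c = 1 - star t * t) :
    ∀ k : ℕ, 1 ≤ k →
      opTrace b (1 - t * star t)
        = opTrace b (t ^ k * (1 - t * star t) * (star t) ^ k)
          + opTrace b (c * (1 - t ^ k * (star t) ^ k) * c) := by
  intro k _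
  set D := 1 - t * star t with hD_def
  have hD : 0 ≤ D := CStarAlgebra.one_sub_mul_star_nonneg ht
  have hcs : star c = c := hc.isSelfAdjoint.star_eq
  have hcol : star t * t + star c * c = 1 := by rw [hcs, hc2, add_sub_cancel]
  have hstep (j : ℕ) : opTrace b (t ^ j * D * star (t ^ j))
      = opTrace b (t ^ (j + 1) * D * star (t ^ (j + 1)))
        + opTrace b (c * t ^ j * D * star (c * t ^ j)) := by
    rw [pow_succ']
    exact opTrace_conj_eq_add b hcol hD _
  have hsum : c * (1 - t ^ k * star t ^ k) * c
      = ∑ j ∈ range k, c * t ^ j * D * star (c * t ^ j) := by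
    simp only [one_sub_pow_mul_pow_eq_sum, ← hD_def, mul_sum, sum_mul, star_mul, hcs, star_pow,
      mul_assoc]
  rw [hsum, opTrace_sum b _ fun j _ ↦ star_right_conjugate_nonneg hD _, ← star_pow]
  simpa using eq_add_sum_range_of_forall_eq_add hstep k
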